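/- Let b be a nonnegative even integer. Then E_b ≡ 3b^2 - 11b + 1 (mod 2^{7}) if 4 | b, and E_b ≡ b^2 - 23b + 41 (mod 2^{7}) if 4 | (b - 2). -/

import Mathlib

/-!
Both `m ↦ E (2m)` and `m ↦ R (2m)`, where `R` is the claimed residue, take the value `1` at
`0` and satisfy `∑ r ≤ n, C(2n, 2r) a r = 0` modulo `2^7` for `n ≥ 1`; since `C(2n, 2n) = 1`
this recurrence determines the sequence, so the two agree modulo `2^7`.

For the residue, write `R (2r) = p (2r) + (-1)^r q (2r)` with `p`, `q` combinations of the
`C(2r, k)`, `k ≤ 2`. The resulting even-index sums `∑ r, C(2n, 2r) C(2r, k) (x²)^r` with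
`x = 1` and `x = i` are halves of `C(2n, k) (x^k (1 + x)^(2n-k) + (-x)^k (1 - x)^(2n-k))`, hence
divisible in `ℤ[i]` by `(1 + i)^(2n-2) = (2i)^(n-1)`. This settles `n ≥ 9`; smaller `n` are
computed.
-/

/-- The Euler numbers `E n`, defined by `E 0 = 1`, `E (2n-1) = 0` for `n ≥ 1`,
and `∑_{r=0}^{n} C(2n, 2r) * E (2r) = 0` for `n ≥ 1`. -/
def eulerE : ℕ → ℤ
  | 0 => 1
  | 1 => 0
  | n + 2 =>
      if Even n then
        -∑ r ∈ (Finset.range (n / 2 + 1)).attach,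
          ((n + 2).choose (2 * r.1) : ℤ) * eulerE (2 * r.1)
      else 0
  decreasing_by
    have := r.2
    simp only [Finset.mem_range] at this
    omega

open Finset

theorem sum_range_choose_mul_choose_mul_pow {R : Type*} [CommSemiring R] (x : R) (N k : ℕ) :
    ∑ j ∈ range (N + 1), (N.choose j * j.choose k : R) * x ^ j
      = N.choose k * x ^ k * (x + 1) ^ (N - k) := by
  rcases lt_or_ge N k with hNk | hkN
  · rw [Nat.choose_eq_zero_of_lt hNk, Nat.cast_zero, zero_mul, zero_mul]
    refine sum_eq_zero fun j hj => ?_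
    rw [Nat.choose_eq_zero_of_lt (n := j) (by grind), Nat.cast_zero, mul_zero, zero_mul]
  obtain ⟨m, rfl⟩ := Nat.exists_eq_add_of_le hkN
  rw [show k + m + 1 = k + (m + 1) by ring, sum_range_add, add_pow, mul_sum,
    Nat.add_sub_cancel_left,
    sum_eq_zero fun j hj => by rw [Nat.choose_eq_zero_of_lt (mem_range.1 hj)]; simp, zero_add]
  refine sum_congr rfl fun i _ => ?_
  rw [← Nat.cast_mul, Nat.choose_mul (Nat.le_add_right k i)]
  simp only [Nat.add_sub_cancel_left, one_pow, Nat.cast_mul, pow_add]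
  ring

theorem sum_range_add_sum_range_neg {R : Type*} [CommRing R] (g : ℕ → R) (x : R) (n : ℕ) :
    ∑ j ∈ range (2 * n + 1), g j * x ^ j + ∑ j ∈ range (2 * n + 1), g j * (-x) ^ j
      = 2 * ∑ r ∈ range (n + 1), g (2 * r) * (x ^ 2) ^ r := by
  induction n with
  | zero => simp; ring
  | succ n ih =>
    rw [show 2 * (n + 1) + 1 = 2 * n + 1 + 1 + 1 by ring, sum_range_succ _ (2 * n + 1 + 1),
      sum_range_succ _ (2 * n + 1), sum_range_succ _ (2 * n + 1 + 1),
      sum_range_succ _ (2 * n + 1), sum_range_succ _ (n + 1), mul_add, ← ih, (odd_two_mul_add_one n).neg_pow,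
      show 2 * n + 1 + 1 = 2 * (n + 1) by ring, (even_two_mul _).neg_pow, pow_mul]
    ring

theorem pow_dvd_two_mul_sum_choose_two_mul {R : Type*} [CommRing R] {π x : R}
    (h₁ : π ∣ x + 1) (h₂ : π ∣ -x + 1) (n k : ℕ) :
    π ^ (2 * n - k) ∣
      2 * ∑ r ∈ range (n + 1),
        ((2 * n).choose (2 * r) * (2 * r).choose k : R) * (x ^ 2) ^ r := by
  rw [← sum_range_add_sum_range_neg (fun j => ((2 * n).choose j * j.choose k : R)),
    sum_range_choose_mul_choose_mul_pow, sum_range_choose_mul_choose_mul_pow]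
  exact dvd_add (Dvd.dvd.mul_left (pow_dvd_pow_of_dvd h₁ _) _)
    (Dvd.dvd.mul_left (pow_dvd_pow_of_dvd h₂ _) _)

namespace GaussianInt

theorem sqrtd_sq : (Zsqrtd.sqrtd : GaussianInt) ^ 2 = -1 := by
  ext <;> simp [sq]

theorem one_add_sqrtd_pow_sixteen : (1 + Zsqrtd.sqrtd : GaussianInt) ^ 16 = 256 := by
  have h : (1 + Zsqrtd.sqrtd : GaussianInt) ^ 2 = 2 * Zsqrtd.sqrtd := by
    linear_combination sqrtd_sq
  rw [show 16 = 2 * 8 by rfl, pow_mul, h, mul_pow, show 8 = 2 * 4 by rfl,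
    pow_mul Zsqrtd.sqrtd, sqrtd_sq]
  norm_num

end GaussianInt

def eulerResidue (b : ℕ) : ℤ := if 4 ∣ b then 3 * b ^ 2 - 11 * b + 1 else b ^ 2 - 23 * b + 41

theorem eulerResidue_two_mul (r : ℕ) :
    eulerResidue (2 * r) = 4 * (2 * r).choose 2 - 15 * (2 * r).choose 1 + 21
      + (-1) ^ r * (2 * (2 * r).choose 2 + 7 * (2 * r).choose 1 - 20) := by
  have h₂ : ((2 * r).choose 2 : ℤ) = r * (2 * r - 1) := by
    qify; rw [Nat.cast_choose_two]; push_cast; ring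
  rw [h₂, Nat.choose_one_right, eulerResidue]
  rcases Nat.even_or_odd' r with ⟨s, rfl | rfl⟩
  · rw [if_pos (by omega), (even_two_mul s).neg_pow]; push_cast; ring
  · rw [if_neg (by omega), (odd_two_mul_add_one s).neg_pow]; push_cast; ring

theorem two_pow_seven_dvd_sum_choose_mul_eulerResidue (n : ℕ) :
    (2 ^ 7 : ℤ) ∣
      ∑ r ∈ range (n + 2), ((2 * (n + 1)).choose (2 * r) : ℤ) * eulerResidue (2 * r) := by
  rcases lt_or_ge n 8 with hn | hn
  · revert n; decide
  set S := ∑ r ∈ range (n + 2), ((2 * (n + 1)).choose (2 * r) : ℤ) * eulerResidue (2 * r)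
  set i : GaussianInt := Zsqrtd.sqrtd
  set T : GaussianInt → ℕ → GaussianInt := fun x k => 2 * ∑ r ∈ range (n + 2),
    ((2 * (n + 1)).choose (2 * r) * (2 * r).choose k : GaussianInt) * (x ^ 2) ^ r
  have hS : ((2 * S : ℤ) : GaussianInt)
      = 4 * T 1 2 - 15 * T 1 1 + 21 * T 1 0 + 2 * T i 2 + 7 * T i 1 - 20 * T i 0 := by
    simp only [S, T, Int.cast_mul, Int.cast_sum, mul_sum, ← sum_add_distrib, ← sum_sub_distrib]
    refine sum_congr rfl fun r _ => ?_
    rw [eulerResidue_two_mul, GaussianInt.sqrtd_sq, Nat.choose_zero_right]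
    push_cast
    ring
  have hdvd : ∀ x, 1 + i ∣ x + 1 → 1 + i ∣ -x + 1 →
      ∀ k ≤ 2, (256 : GaussianInt) ∣ T x k := by
    intro x h₁ h₂ k hk
    rw [← GaussianInt.one_add_sqrtd_pow_sixteen]
    exact (pow_dvd_pow _ (by omega)).trans
      (pow_dvd_two_mul_sum_choose_two_mul h₁ h₂ (n + 1) k)
  have hA := hdvd 1 ⟨1 - i, by linear_combination GaussianInt.sqrtd_sq⟩ (by simp)
  have hB := hdvd i (by rw [add_comm]) ⟨-i, by linear_combination GaussianInt.sqrtd_sq⟩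
  have h256 : (256 : GaussianInt) ∣ ((2 * S : ℤ) : GaussianInt) := by
    rw [hS]
    exact dvd_sub (dvd_add (dvd_add (dvd_add (dvd_sub ((hA 2 le_rfl).mul_left 4)
      ((hA 1 (by norm_num)).mul_left 15)) ((hA 0 (by norm_num)).mul_left 21))
      ((hB 2 le_rfl).mul_left 2)) ((hB 1 (by norm_num)).mul_left 7))
      ((hB 0 (by norm_num)).mul_left 20)
  have : (256 : ℤ) ∣ 2 * S := by exact_mod_cast (Zsqrtd.intCast_dvd_intCast _ _).1 h256
  omega

theorem sum_range_choose_mul_eulerE (n : ℕ) :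
    ∑ r ∈ range (n + 2), ((2 * (n + 1)).choose (2 * r) : ℤ) * eulerE (2 * r) = 0 := by
  rw [sum_range_succ, Nat.choose_self, Nat.cast_one, one_mul,
    show 2 * (n + 1) = 2 * n + 2 by ring, eulerE, if_pos (even_two_mul n),
    Nat.mul_div_cancel_left n two_pos,
    sum_attach (range (n + 1)) fun r => ((2 * n + 2).choose (2 * r) : ℤ) * eulerE (2 * r),
    add_neg_cancel]

theorem eq_of_sum_range_choose_two_mul_eq {R : Type*} [Ring R] {a b : ℕ → R} (h₀ : a 0 = b 0)
    (h : ∀ n, ∑ r ∈ range (n + 2), ((2 * (n + 1)).choose (2 * r) : R) * a r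
      = ∑ r ∈ range (n + 2), ((2 * (n + 1)).choose (2 * r) : R) * b r) :
    a = b := by
  funext m
  induction m using Nat.strong_induction_on with
  | _ m ih =>
    rcases m with _ | n
    · exact h₀
    have hlt : ∑ r ∈ range (n + 1), ((2 * (n + 1)).choose (2 * r) : R) * a r
        = ∑ r ∈ range (n + 1), ((2 * (n + 1)).choose (2 * r) : R) * b r :=
      sum_congr rfl fun r hr => by rw [ih r (by simpa using hr)]
    simpa [sum_range_succ, hlt] using h n

theorem eulerE_two_mul_modEq_eulerResidue (m : ℕ) :
    eulerE (2 * m) ≡ eulerResidue (2 * m) [ZMOD 2 ^ 7] := by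
  rw [show (2 ^ 7 : ℤ) = (2 ^ 7 : ℕ) by norm_num, ← ZMod.intCast_eq_intCast_iff]
  refine congrFun (eq_of_sum_range_choose_two_mul_eq (R := ZMod (2 ^ 7))
    (a := fun r => (eulerE (2 * r) : ZMod (2 ^ 7)))
    (b := fun r => (eulerResidue (2 * r) : ZMod (2 ^ 7))) (by simp [eulerE, eulerResidue])
    fun n => ?_) m
  have hE := congrArg (Int.cast : ℤ → ZMod (2 ^ 7)) (sum_range_choose_mul_eulerE n)
  have hR := (ZMod.intCast_zmod_eq_zero_iff_dvd _ (2 ^ 7)).2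
    (by exact_mod_cast two_pow_seven_dvd_sum_choose_mul_eulerResidue n)
  push_cast at hE hR
  rw [hE, hR]

theorem eulerE_mod_128 (b : ℕ) (hb : Even b) :
    (4 ∣ b → eulerE b ≡ 3 * (b : ℤ) ^ 2 - 11 * b + 1 [ZMOD 2 ^ 7]) ∧
    ((4 : ℤ) ∣ ((b : ℤ) - 2) → eulerE b ≡ (b : ℤ) ^ 2 - 23 * b + 41 [ZMOD 2 ^ 7]) := by
  obtain ⟨m, rfl⟩ := hb
  rw [← two_mul]
  refine ⟨fun h => ?_, fun h => ?_⟩ <;>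
    convert eulerE_two_mul_modEq_eulerResidue m using 1 <;> rw [eulerResidue]
  · rw [if_pos h]
  · rw [if_neg (by omega)]
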